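/- Let X be an ℝ^d-valued random variable with mean μ, and p > q ≥ 1. Suppose X is (C_p^{1/p}/δ^{1/p−1}, δ)-resilient in the Euclidean norm for all δ ≤ 1/2. Then for every unit vector v, E[|⟨v, X − μ⟩|^q] ≤ (2C_p)^{q/p} · p/(p−q). -/

import Mathlib

/-!
Projecting onto `v` turns resilience into the bound
`|∫_A ⟪v, X - μ⟫| ≤ C_p^{1/p} P(A)^{1-1/p} (1 - P(A))` for events with `P(A) ≤ 1/2`.
On `A = {⟪v, X - μ⟫ ≥ t}` the integral is at least `t P(A)`, which yields `P(A) ≤ C_p / t^p`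
once `t > C_p^{1/p}` (if `P(A) > 1/2`, the same bound on the complement, whose integral is
`-∫_A ⟪v, X - μ⟫` as the projection is centred, is violated). Hence
`P(|⟪v, X - μ⟫| ≥ t) ≤ 2C_p / t^p` for `t > (2C_p)^{1/p}`, and the layer-cake formula,
split at `(2C_p)^{1/p}`, turns this tail bound into the moment bound.
-/

open MeasureTheory
open scoped RealInnerProductSpace

open Set Real

section

variable {Ω : Type*} [MeasurableSpace Ω] {μ : Measure Ω}

section Resilience

variable {E : Type*} [NormedAddCommGroup E] [InnerProductSpace ℝ E] [CompleteSpace E]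

def IsResilient (μ : Measure Ω) (X : Ω → E) (m : E) (σ δ : ℝ) : Prop :=
  ∀ A : Set Ω, MeasurableSet A → 0 < μ.real A → μ.real A ≤ δ →
    ‖(μ.real A)⁻¹ • ∫ ω in A, X ω ∂μ - m‖ ≤ σ * ((1 - μ.real A) / μ.real A)

lemma IsResilient.abs_setIntegral_inner_sub_le [IsFiniteMeasure μ] {X : Ω → E} {m v : E}
    {σ δ : ℝ} (hres : IsResilient μ X m σ δ) (hX : Integrable X μ) (hv : ‖v‖ ≤ 1) {A : Set Ω}
    (hA : MeasurableSet A) (hA0 : 0 < μ.real A) (hAδ : μ.real A ≤ δ) :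
    |∫ ω in A, ⟪v, X ω - m⟫ ∂μ| ≤ σ * (1 - μ.real A) := by
  have hconst : IntegrableOn (fun _ => m) A μ := integrableOn_const (measure_ne_top μ A)
  have hmean : ∫ ω in A, X ω - m ∂μ = μ.real A • ((μ.real A)⁻¹ • ∫ ω in A, X ω ∂μ - m) := by
    rw [integral_sub hX.integrableOn hconst, setIntegral_const, smul_sub, smul_inv_smul₀ hA0.ne']
  calc |∫ ω in A, ⟪v, X ω - m⟫ ∂μ|
      ≤ ‖v‖ * ‖∫ ω in A, X ω - m ∂μ‖ := by
        rw [integral_inner (f := fun ω => X ω - m) (hX.integrableOn.sub hconst)]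
        exact abs_real_inner_le_norm _ _
    _ ≤ μ.real A * ‖(μ.real A)⁻¹ • ∫ ω in A, X ω ∂μ - m‖ := by
        rw [hmean, norm_smul, Real.norm_of_nonneg hA0.le]
        exact mul_le_of_le_one_left (by positivity) hv
    _ ≤ μ.real A * (σ * ((1 - μ.real A) / μ.real A)) := by gcongr; exact hres A hA hA0 hAδ
    _ = σ * (1 - μ.real A) := by field_simp

end Resilience

lemma rpow_mul_le_of_mul_le_rpow_mul_rpow {a t C p : ℝ} (ha : 0 < a) (ht : 0 ≤ t) (hC : 0 ≤ C)
    (hp : 0 < p) (h : t * a ≤ C ^ (1 / p) * a ^ (1 - 1 / p)) : t ^ p * a ≤ C := by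
  have hap : 0 < a ^ (1 / p) := by positivity
  have h' : t * a ^ (1 / p) ≤ C ^ (1 / p) := by
    rw [rpow_sub ha, rpow_one, mul_div_assoc', le_div_iff₀ hap, mul_assoc, mul_comm a,
      ← mul_assoc] at h
    exact le_of_mul_le_mul_right h ha
  have h'' := rpow_le_rpow (by positivity) h' hp.le
  rwa [mul_rpow ht hap.le, one_div, rpow_inv_rpow ha.le hp.ne', rpow_inv_rpow hC hp.ne'] at h''

lemma measureReal_le_div_rpow_of_forall_le [IsProbabilityMeasure μ] {Y : Ω → ℝ} {p C t : ℝ}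
    {A : Set Ω} (hY : Integrable Y μ) (hY0 : ∫ ω, Y ω ∂μ = 0) (hp : 1 ≤ p) (hC : 0 ≤ C)
    (hres : ∀ B : Set Ω, MeasurableSet B → 0 < μ.real B → μ.real B ≤ 1 / 2 →
      |∫ ω in B, Y ω ∂μ| ≤ C ^ (1 / p) * μ.real B ^ (1 - 1 / p) * (1 - μ.real B))
    (hCt : C ^ (1 / p) < t) (hA : MeasurableSet A) (hAY : ∀ ω ∈ A, t ≤ Y ω) :
    μ.real A ≤ C / t ^ p := by
  have ht : 0 < t := lt_of_le_of_lt (by positivity) hCt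
  have hint : t * μ.real A ≤ ∫ ω in A, Y ω ∂μ :=
    setIntegral_ge_of_const_le_real hA (measure_ne_top μ A) hAY hY.integrableOn
  rcases le_or_gt (μ.real A) (1 / 2) with hA2 | hA2
  · rcases (measureReal_nonneg : 0 ≤ μ.real A).eq_or_lt with hA0 | hA0
    · rw [← hA0]; positivity
    rw [le_div_iff₀ (by positivity), mul_comm]
    refine rpow_mul_le_of_mul_le_rpow_mul_rpow hA0 ht.le hC (by linarith) ?_
    calc t * μ.real A ≤ |∫ ω in A, Y ω ∂μ| := hint.trans (le_abs_self _)
      _ ≤ C ^ (1 / p) * μ.real A ^ (1 - 1 / p) * (1 - μ.real A) := hres A hA hA0 hA2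
      _ ≤ C ^ (1 / p) * μ.real A ^ (1 - 1 / p) :=
          mul_le_of_le_one_right (by positivity) (by linarith)
  -- The event `A` has mass more than `1 / 2`, so resilience applies to `Aᶜ`, where `Y` has
  -- integral `-∫ ω in A, Y ω ∂μ`; this forces `t ≤ C ^ (1 / p)`.
  exfalso
  have hcompl : ∫ ω in Aᶜ, Y ω ∂μ = -∫ ω in A, Y ω ∂μ := by
    linarith [integral_add_compl hA hY]
  have hAc : μ.real Aᶜ = 1 - μ.real A := probReal_compl_eq_one_sub hA
  rcases (measureReal_nonneg : 0 ≤ μ.real Aᶜ).eq_or_lt with hAc0 | hAc0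
  · have : ∫ ω in Aᶜ, Y ω ∂μ = 0 :=
      setIntegral_measure_zero _ ((measureReal_eq_zero_iff (measure_ne_top μ _)).1 hAc0.symm)
    nlinarith
  have hbound := hres Aᶜ hA.compl hAc0 (by linarith)
  rw [hcompl, abs_neg, hAc, sub_sub_cancel] at hbound
  have hpow : (1 - μ.real A) ^ (1 - 1 / p) ≤ 1 :=
    rpow_le_one (by linarith) (by linarith) (sub_nonneg.2 (div_le_one_of_le₀ hp (by linarith)))
  have : t * μ.real A ≤ C ^ (1 / p) * μ.real A :=
    calc t * μ.real A ≤ |∫ ω in A, Y ω ∂μ| := hint.trans (le_abs_self _)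
      _ ≤ C ^ (1 / p) * (1 - μ.real A) ^ (1 - 1 / p) * μ.real A := hbound
      _ ≤ C ^ (1 / p) * μ.real A := by gcongr; exact mul_le_of_le_one_right (by positivity) hpow
  exact hCt.not_ge (le_of_mul_le_mul_right this (by linarith))

lemma measureReal_abs_ge_le [IsProbabilityMeasure μ] {Y : Ω → ℝ} {p C t : ℝ}
    (hYm : Measurable Y) (hY : Integrable Y μ) (hY0 : ∫ ω, Y ω ∂μ = 0) (hp : 1 ≤ p) (hC : 0 ≤ C)
    (hres : ∀ A : Set Ω, MeasurableSet A → 0 < μ.real A → μ.real A ≤ 1 / 2 →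
      |∫ ω in A, Y ω ∂μ| ≤ C ^ (1 / p) * μ.real A ^ (1 - 1 / p) * (1 - μ.real A))
    (hCt : C ^ (1 / p) < t) :
    μ.real {ω | t ≤ |Y ω|} ≤ 2 * C / t ^ p := by
  have hupper : μ.real {ω | t ≤ Y ω} ≤ C / t ^ p :=
    measureReal_le_div_rpow_of_forall_le hY hY0 hp hC hres hCt
      (measurableSet_le measurable_const hYm) fun _ h => h
  have hlower : μ.real {ω | t ≤ -Y ω} ≤ C / t ^ p := by
    refine measureReal_le_div_rpow_of_forall_le (Y := fun ω => -Y ω) hY.neg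
      (by rw [integral_neg, hY0, neg_zero]) hp hC (fun A hA hA0 hA2 => ?_) hCt
      (measurableSet_le measurable_const hYm.neg) fun _ h => h
    rw [integral_neg, abs_neg]
    exact hres A hA hA0 hA2
  calc μ.real {ω | t ≤ |Y ω|} ≤ μ.real ({ω | t ≤ Y ω} ∪ {ω | t ≤ -Y ω}) :=
        measureReal_mono fun ω (hω : t ≤ |Y ω|) => (le_abs.1 hω :)
    _ ≤ μ.real {ω | t ≤ Y ω} + μ.real {ω | t ≤ -Y ω} := measureReal_union_le _ _
    _ ≤ C / t ^ p + C / t ^ p := add_le_add hupper hlower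
    _ = 2 * C / t ^ p := by ring

lemma lintegral_Ioc_rpow {r T : ℝ} (hr : -1 < r) (hT : 0 ≤ T) :
    ∫⁻ t in Ioc 0 T, ENNReal.ofReal (t ^ r) = ENNReal.ofReal (T ^ (r + 1) / (r + 1)) := by
  rw [← ofReal_integral_eq_lintegral_ofReal, ← intervalIntegral.integral_of_le hT,
    integral_rpow (Or.inl hr), zero_rpow (by linarith), sub_zero]
  · exact (intervalIntegrable_iff_integrableOn_Ioc_of_le hT).1
      (intervalIntegral.intervalIntegrable_rpow' hr)
  · filter_upwards [self_mem_ae_restrict measurableSet_Ioc] with t ht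
    exact rpow_nonneg ht.1.le r

lemma lintegral_Ioi_rpow {r T : ℝ} (hr : r < -1) (hT : 0 < T) :
    ∫⁻ t in Ioi T, ENNReal.ofReal (t ^ r) = ENNReal.ofReal (-T ^ (r + 1) / (r + 1)) := by
  rw [← ofReal_integral_eq_lintegral_ofReal (integrableOn_Ioi_rpow_of_lt hr hT),
    integral_Ioi_rpow_of_lt hr hT]
  filter_upwards [self_mem_ae_restrict measurableSet_Ioi] with t ht
  exact rpow_nonneg (hT.trans ht).le r

lemma mul_rpow_div_add_mul_rpow_div_eq {K p q : ℝ} (hK : 0 < K) (hp : 0 < p) (hqp : q ≠ p)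
    (hq : q ≠ 0) :
    q * ((K ^ (1 / p)) ^ q / q + K * (-(K ^ (1 / p)) ^ (q - p) / (q - p))) =
      K ^ (q / p) * (p / (p - q)) := by
  have hpq : p - q ≠ 0 := sub_ne_zero.2 hqp.symm
  have hTq : (K ^ (1 / p)) ^ q = K ^ (q / p) := by rw [← rpow_mul hK.le]; ring_nf
  have hKT : K * (K ^ (1 / p)) ^ (q - p) = K ^ (q / p) := by
    have he : 1 + 1 / p * (q - p) = q / p := by field_simp; ring
    rw [← rpow_mul hK.le, ← rpow_one_add' hK.le (he ▸ div_ne_zero hq hp.ne'), he]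
  calc _ = (K ^ (1 / p)) ^ q + q / (p - q) * (K * (K ^ (1 / p)) ^ (q - p)) := by
        field_simp
        ring
    _ = _ := by rw [hTq, hKT]; field_simp; ring

lemma integral_rpow_le_of_measureReal_le [IsProbabilityMeasure μ] {Z : Ω → ℝ} {p q K : ℝ}
    (hZ0 : ∀ ω, 0 ≤ Z ω) (hZ : AEMeasurable Z μ) (hq : 0 < q) (hqp : q < p) (hK : 0 < K)
    (htail : ∀ t, K ^ (1 / p) < t → μ.real {ω | t ≤ Z ω} ≤ K / t ^ p) :
    ∫ ω, Z ω ^ q ∂μ ≤ K ^ (q / p) * (p / (p - q)) := by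
  set T := K ^ (1 / p)
  have hT : 0 < T := by positivity
  have hnear : ∫⁻ t in Ioc 0 T, μ {ω | t ≤ Z ω} * ENNReal.ofReal (t ^ (q - 1)) ≤
      ENNReal.ofReal (T ^ q / q) := by
    calc _ ≤ ∫⁻ t in Ioc 0 T, ENNReal.ofReal (t ^ (q - 1)) :=
          lintegral_mono fun t => mul_le_of_le_one_left' prob_le_one
      _ = _ := by rw [lintegral_Ioc_rpow (by linarith) hT.le, sub_add_cancel]
  have hfar : ∫⁻ t in Ioi T, μ {ω | t ≤ Z ω} * ENNReal.ofReal (t ^ (q - 1)) ≤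
      ENNReal.ofReal K * ENNReal.ofReal (-T ^ (q - p) / (q - p)) := by
    calc _ ≤ ∫⁻ t in Ioi T, ENNReal.ofReal K * ENNReal.ofReal (t ^ (q - 1 - p)) := by
          refine setLIntegral_mono' measurableSet_Ioi fun t ht => ?_
          have ht0 : 0 < t := hT.trans ht
          rw [← ofReal_measureReal, ← ENNReal.ofReal_mul hK.le, rpow_sub ht0 (q - 1) p,
            mul_div_assoc', ← div_mul_eq_mul_div, ENNReal.ofReal_mul (by positivity)]
          gcongr
          exact htail t ht
      _ = _ := by
          rw [lintegral_const_mul' _ _ ENNReal.ofReal_ne_top,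
            lintegral_Ioi_rpow (by linarith) hT, show q - 1 - p + 1 = q - p by ring]
  have hlin :
      ∫⁻ ω, ENNReal.ofReal (Z ω ^ q) ∂μ ≤ ENNReal.ofReal (K ^ (q / p) * (p / (p - q))) := by
    rw [lintegral_rpow_eq_lintegral_meas_le_mul μ (ae_of_all _ hZ0) hZ hq,
      ← Ioc_union_Ioi_eq_Ioi hT.le, lintegral_union measurableSet_Ioi (Ioc_disjoint_Ioi le_rfl),
      ← mul_rpow_div_add_mul_rpow_div_eq hK (hq.trans hqp) hqp.ne hq.ne']
    have hfar_nonneg : 0 ≤ -T ^ (q - p) / (q - p) :=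
      div_nonneg_of_nonpos (neg_nonpos.2 (by positivity)) (by linarith)
    calc _ ≤ ENNReal.ofReal q * (ENNReal.ofReal (T ^ q / q) +
          ENNReal.ofReal K * ENNReal.ofReal (-T ^ (q - p) / (q - p))) := by gcongr
      _ = _ := by
          rw [← ENNReal.ofReal_mul hK.le, ← ENNReal.ofReal_add (by positivity) (by positivity),
            ← ENNReal.ofReal_mul hq.le]
  rw [integral_eq_lintegral_of_nonneg_ae (ae_of_all _ fun ω => rpow_nonneg (hZ0 ω) q)
    (hZ.pow_const q).aestronglyMeasurable]
  exact ENNReal.toReal_le_of_le_ofReal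
    (mul_nonneg (by positivity) (div_nonneg (by linarith) (by linarith))) hlin

end

theorem stmt5 {Ω : Type*} [MeasurableSpace Ω] (μ : Measure Ω) [IsProbabilityMeasure μ]
    {d : ℕ} (X : Ω → EuclideanSpace ℝ (Fin d)) (hX : Integrable X μ)
    (m : EuclideanSpace ℝ (Fin d)) (hm : ∫ ω, X ω ∂μ = m)
    (p q Cp : ℝ) (hq : 1 ≤ q) (hpq : q < p) (hCp : 0 < Cp)
    (hres : ∀ δ : ℝ, 0 < δ → δ ≤ 1 / 2 →
      ∀ A : Set Ω, MeasurableSet A → 0 < (μ A).toReal → (μ A).toReal ≤ δ →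
        ‖(μ A).toReal⁻¹ • (∫ ω in A, X ω ∂μ) - m‖ ≤
          (Cp ^ (1 / p) / δ ^ (1 / p - 1)) * ((1 - (μ A).toReal) / (μ A).toReal)) :
    ∀ v : EuclideanSpace ℝ (Fin d), ‖v‖ = 1 →
      ∫ ω, |⟪v, X ω - m⟫| ^ q ∂μ ≤ (2 * Cp) ^ (q / p) * (p / (p - q)) := by
  intro v hv
  have hp : 1 < p := hq.trans_lt hpq
  have hXm : Integrable (fun ω => X ω - m) μ := hX.sub (integrable_const m)
  have hY : Integrable (fun ω => ⟪v, X ω - m⟫) μ := hXm.const_inner v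
  -- Resilience only speaks about measurable events, so pass to a measurable version.
  set Y := hY.1.mk
  have hYY : (fun ω => ⟪v, X ω - m⟫) =ᵐ[μ] Y := hY.1.ae_eq_mk
  have hYm : Measurable Y := hY.1.stronglyMeasurable_mk.measurable
  have hY0 : ∫ ω, Y ω ∂μ = 0 := by
    rw [← integral_congr_ae hYY, integral_inner hXm, integral_sub hX (integrable_const m), hm,
      integral_const, probReal_univ, one_smul, sub_self, inner_zero_right]
  have hYres : ∀ A : Set Ω, MeasurableSet A → 0 < μ.real A → μ.real A ≤ 1 / 2 →
      |∫ ω in A, Y ω ∂μ| ≤ Cp ^ (1 / p) * μ.real A ^ (1 - 1 / p) * (1 - μ.real A) := by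
    intro A hA hA0 hA2
    rw [← integral_congr_ae (ae_restrict_of_ae hYY), mul_assoc]
    have := IsResilient.abs_setIntegral_inner_sub_le (hres _ hA0 hA2) hX hv.le hA hA0 le_rfl
    rwa [div_eq_mul_inv, ← rpow_neg hA0.le, neg_sub, mul_assoc] at this
  have htail (t : ℝ) (ht : (2 * Cp) ^ (1 / p) < t) : μ.real {ω | t ≤ |Y ω|} ≤ 2 * Cp / t ^ p :=
    measureReal_abs_ge_le hYm (hY.congr hYY) hY0 hp.le hCp.le hYres <|
      (rpow_le_rpow hCp.le (by linarith) (by positivity)).trans_lt ht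
  calc ∫ ω, |⟪v, X ω - m⟫| ^ q ∂μ = ∫ ω, |Y ω| ^ q ∂μ :=
        integral_congr_ae (hYY.mono fun _ h => congrArg (|·| ^ q) h)
    _ ≤ _ := integral_rpow_le_of_measureReal_le (fun ω => abs_nonneg _)
        hYm.abs.aemeasurable (by linarith) hpq (by positivity) htail
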